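/- Let G be a graph without a 2-factor and let (S,T) be a minimum barrier chosen so that h_G(S,T) is smallest among minimum barriers. Let v ∈ T with |𝒞_v| ≥ 2 and |𝒞_{1v}| ≥ 1. Then for every vertex w of any component D ∈ 𝒞_{1v}, the number of edges from w into V(D) ∪ {v} is at least 2. -/

import Mathlib

open SimpleGraph

namespace VizingTwoFactor

variable {V : Type*}

/-- The degree of a vertex, as the `ncard` of its neighbor set. -/
noncomputable def ndeg (G : SimpleGraph V) (v : V) : ℕ :=
  (G.neighborSet v).ncard

/-- `G` is bipartite with parts `X` and `T`. -/
def IsBipartiteWith (G : SimpleGraph V) (X T : Set V) : Prop :=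
  Disjoint X T ∧ ∀ u v : V, G.Adj u v → (u ∈ X ∧ v ∈ T) ∨ (u ∈ T ∧ v ∈ X)

/-- The set of neighbors of a set of vertices. -/
def NSet (G : SimpleGraph V) (A : Set V) : Set V :=
  {v | ∃ a ∈ A, G.Adj a v}

/-- `G` has a matching saturating the vertex set `T`. -/
def HasMatchingSaturating (G : SimpleGraph V) (T : Set V) : Prop :=
  ∃ M : G.Subgraph, M.IsMatching ∧ T ⊆ M.verts

/-- Number of (ordered) adjacent pairs with first coordinate in `A` and second in `B`;
for disjoint `A`, `B` this is the number of edges between `A` and `B`. -/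
noncomputable def eBetween (G : SimpleGraph V) (A B : Set V) : ℕ :=
  {p : V × V | p.1 ∈ A ∧ p.2 ∈ B ∧ G.Adj p.1 p.2}.ncard

/-- Number of neighbors of `v` inside `A`. -/
noncomputable def degIn (G : SimpleGraph V) (A : Set V) (v : V) : ℕ :=
  (G.neighborSet v ∩ A).ncard

/-- The vertex set (in `V`) of a connected component of an induced subgraph. -/
def csupp (G : SimpleGraph V) (U : Set V) (C : (G.induce U).ConnectedComponent) : Set V :=
  Subtype.val '' C.supp

/-- The odd components of `G − (S ∪ T)` w.r.t. `(S,T)`: components sending an odd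
number of edges to `T`. -/
noncomputable def oddComps (G : SimpleGraph V) (S T : Set V) :
    Set ((G.induce (S ∪ T)ᶜ).ConnectedComponent) :=
  {C | Odd (eBetween G (csupp G (S ∪ T)ᶜ C) T)}

/-- `h_G(S,T)`: the number of odd components. -/
noncomputable def hNum (G : SimpleGraph V) (S T : Set V) : ℕ :=
  (oddComps G S T).ncard

/-- `δ_G(S,T) = 2|S| + Σ_{v∈T} deg_{G−S}(v) − 2|T| − h_G(S,T)`. -/
noncomputable def deltaST (G : SimpleGraph V) (S T : Set V) : ℤ :=
  2 * S.ncard + (∑ᶠ v ∈ T, (degIn G Sᶜ v : ℤ)) - 2 * T.ncard - hNum G S T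

/-- A barrier. -/
def IsBarrier (G : SimpleGraph V) (S T : Set V) : Prop :=
  Disjoint S T ∧ deltaST G S T ≤ -2

/-- A minimum barrier: minimizes `|S ∪ T|` among barriers. -/
def IsMinBarrier (G : SimpleGraph V) (S T : Set V) : Prop :=
  IsBarrier G S T ∧ ∀ S' T' : Set V, IsBarrier G S' T' → (S ∪ T).ncard ≤ (S' ∪ T').ncard

/-- `G` has a 2-factor: a spanning subgraph in which every vertex has degree 2. -/
def HasTwoFactor (G : SimpleGraph V) : Prop :=
  ∃ H : SimpleGraph V, H ≤ G ∧ ∀ v : V, ndeg H v = 2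

/-- `G` has a proper edge coloring with `k` colors. -/
def HasEdgeColoring (G : SimpleGraph V) (k : ℕ) : Prop :=
  ∃ f : G.edgeSet → Fin k, ∀ e₁ e₂ : G.edgeSet, e₁ ≠ e₂ →
    (∃ v : V, v ∈ (e₁ : Sym2 V) ∧ v ∈ (e₂ : Sym2 V)) → f e₁ ≠ f e₂

/-- The chromatic index `χ'(G)`. -/
noncomputable def chromIdx (G : SimpleGraph V) : ℕ :=
  sInf {k | HasEdgeColoring G k}

/-- `Δ` is the maximum degree of `G`. -/
def IsMaxDegree (G : SimpleGraph V) (Δ : ℕ) : Prop :=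
  (∀ v : V, ndeg G v ≤ Δ) ∧ ∃ v : V, ndeg G v = Δ

/-- `G` is `Δ`-critical: no isolated vertices, maximum degree `Δ`, `χ'(G) = Δ + 1`, and
`χ'(G − e) = Δ` for every edge `e`. -/
def IsDeltaCritical (G : SimpleGraph V) (Δ : ℕ) : Prop :=
  (∀ v : V, ∃ u : V, G.Adj v u) ∧ IsMaxDegree G Δ ∧ chromIdx G = Δ + 1 ∧
    ∀ e ∈ G.edgeSet, chromIdx (G.deleteEdges {e}) = Δ

/-- `T` is an independent set in `G`. -/
def IsIndep (G : SimpleGraph V) (T : Set V) : Prop :=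
  ∀ u ∈ T, ∀ v ∈ T, ¬ G.Adj u v

/-- The bipartite graph `H*` consisting of the edges of `G` between `V(G) \ T` and `T`. -/
def betweenGraph (G : SimpleGraph V) (T : Set V) : SimpleGraph V where
  Adj u v := G.Adj u v ∧ ((u ∉ T ∧ v ∈ T) ∨ (u ∈ T ∧ v ∉ T))
  symm := ⟨fun u v h => ⟨h.1.symm, h.2.elim (fun h' => Or.inr ⟨h'.2, h'.1⟩)
    (fun h' => Or.inl ⟨h'.2, h'.1⟩)⟩⟩
  loopless := ⟨fun u h => G.loopless.irrefl u h.1⟩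

/-!
Suppose a vertex `w` of `D` has at most one neighbour in `D ∪ {v}`. As the only edge between `D`
and `T` ends at `v`, `w` has at most one neighbour outside `S`. Exchange `v` and `w`, i.e. pass to
`T' = T - v + w`. The components of `G - (S ∪ T)` with no neighbour of `v` survive unchanged, with
the same number of edges to `T'`, and everything else merges into the component of `v`. So if `a`
odd components touch `v` (`2 ≤ a ≤ deg_{G-S}(v)`), then `h - a ≤ h' ≤ h - a + 1` for
`h = h_G(S,T)` and `h' = h_G(S,T')`, whence
`δ(S,T') - δ(S,T) = deg_{G-S}(w) - deg_{G-S}(v) + h - h' ≤ 1`. Now `δ` is always even, because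
`∑_{t ∈ T} deg_{G-S}(t) ≡ e(G - (S ∪ T), T) ≡ h (mod 2)`. So `(S,T')` is again a minimum barrier,
but with fewer odd components.
-/

def ReachableIn (G : SimpleGraph V) (A : Set V) (a b : V) : Prop :=
  ∃ p : G.Walk a b, ∀ x ∈ p.support, x ∈ A

/-- Components are handled as vertex sets rather than as `ConnectedComponent`s of `G.induce A`,
so that components of different induced subgraphs can be compared; `csupp` translates. -/
def IsComponentIn (G : SimpleGraph V) (A K : Set V) : Prop :=
  ∃ y ∈ K, ∀ z, z ∈ K ↔ ReachableIn G A y z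

variable {G : SimpleGraph V} {A B C K K₁ K₂ : Set V} {a b c w : V}

namespace ReachableIn

lemma refl (ha : a ∈ A) : ReachableIn G A a a :=
  ⟨.nil, by simpa⟩

lemma of_adj (hab : G.Adj a b) (ha : a ∈ A) (hb : b ∈ A) : ReachableIn G A a b :=
  ⟨hab.toWalk, by simp [ha, hb]⟩

lemma mem_right (h : ReachableIn G A a b) : b ∈ A :=
  h.elim fun p hp => hp _ p.end_mem_support

lemma symm (h : ReachableIn G A a b) : ReachableIn G A b a :=
  h.elim fun p hp => ⟨p.reverse, by simpa using hp⟩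

lemma trans (h : ReachableIn G A a b) (h' : ReachableIn G A b c) : ReachableIn G A a c := by
  obtain ⟨p, hp⟩ := h
  obtain ⟨q, hq⟩ := h'
  refine ⟨p.append q, fun x hx => ?_⟩
  rcases Walk.mem_support_append_iff p q |>.1 hx with hx | hx
  exacts [hp x hx, hq x hx]

lemma trans_adj (h : ReachableIn G A a b) (hbc : G.Adj b c) (hc : c ∈ A) :
    ReachableIn G A a c :=
  h.trans (of_adj hbc h.mem_right hc)

lemma mono (hAB : A ⊆ B) (h : ReachableIn G A a b) : ReachableIn G B a b :=
  h.elim fun p hp => ⟨p, fun x hx => hAB (hp x hx)⟩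

lemma exists_adj_of_ne (h : ReachableIn G A a b) (hab : a ≠ b) : ∃ u ∈ A, G.Adj a u := by
  obtain ⟨p, hp⟩ := h
  cases p with
  | nil => exact absurd rfl hab
  | cons hadj q => exact ⟨_, hp _ (by simp), hadj⟩

lemma of_closed (hK : ∀ x ∈ K, ∀ y, G.Adj x y → y ∈ A → y ∈ K) (ha : a ∈ K)
    (h : ReachableIn G A a b) : ReachableIn G K a b := by
  obtain ⟨p, hp⟩ := h
  induction p with
  | nil => exact refl ha
  | cons hadj q ih =>
    have hx := hK _ ha _ hadj (hp _ (by simp))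
    exact (of_adj hadj ha hx).trans (ih hx fun t ht => hp t (by simp [ht]))

lemma diff_singleton (hw : (G.neighborSet w ∩ A).Subsingleton) (h : ReachableIn G A a b)
    (ha : a ≠ w) (hb : b ≠ w) : ReachableIn G (A \ {w}) a b := by
  -- Strengthened so that the start may be `w`, entered from the neighbour `u`.
  suffices key : ∀ {c} (p : G.Walk c b), (∀ x ∈ p.support, x ∈ A) →
      ∀ u ∈ A, u ≠ w → (u = c ∨ c = w ∧ G.Adj u w) → ReachableIn G (A \ {w}) u b from
    h.elim fun p hp => key p hp a (hp _ p.start_mem_support) ha (.inl rfl)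
  clear h ha
  intro c p
  induction p with
  | nil =>
    rintro - u hu huw (rfl | ⟨rfl, -⟩)
    exacts [refl ⟨hu, huw⟩, absurd rfl hb]
  | @cons c d _ hcd q ih =>
    rintro hp u hu huw (rfl | ⟨rfl, huw'⟩)
    · have hq : ∀ x ∈ q.support, x ∈ A := fun x hx => hp x (by simp [hx])
      by_cases hdw : d = w
      · exact ih hb hq u hu huw (.inr ⟨hdw, hdw ▸ hcd⟩)
      · have hd : d ∈ A := hp d (by simp)
        exact (of_adj (A := A \ {w}) hcd ⟨hu, huw⟩ ⟨hd, hdw⟩).trans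
          (ih hb hq d hd hdw (.inl rfl))
    · have hud : u = d := hw ⟨huw'.symm, hu⟩ ⟨hcd, hp d (by simp)⟩
      exact ih hb (fun x hx => hp x (by simp [hx])) u hu huw (.inl hud)

end ReachableIn

lemma isComponentIn_setOf_reachableIn (ha : a ∈ A) :
    IsComponentIn G A {z | ReachableIn G A a z} :=
  ⟨a, .refl ha, fun _ => Iff.rfl⟩

namespace IsComponentIn

lemma subset (h : IsComponentIn G A K) : K ⊆ A := by
  obtain ⟨y, -, hy⟩ := h
  exact fun z hz => ((hy z).1 hz).mem_right

lemma mem_iff (h : IsComponentIn G A K) (hb : b ∈ K) : c ∈ K ↔ ReachableIn G A b c := by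
  obtain ⟨y, -, hy⟩ := h
  rw [hy] at hb ⊢
  exact ⟨hb.symm.trans, hb.trans⟩

lemma eq_of_mem (h₁ : IsComponentIn G A K₁) (h₂ : IsComponentIn G A K₂) (hb₁ : b ∈ K₁)
    (hb₂ : b ∈ K₂) : K₁ = K₂ :=
  Set.ext fun _ => (h₁.mem_iff hb₁).trans (h₂.mem_iff hb₂).symm

lemma mem_of_adj (h : IsComponentIn G A K) (hb : b ∈ K) (hbc : G.Adj b c) (hc : c ∈ A) :
    c ∈ K :=
  (h.mem_iff hb).2 (.of_adj hbc (h.subset hb) hc)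

lemma of_closed (h : IsComponentIn G A K) (hKB : K ⊆ B)
    (hK : ∀ a ∈ K, ∀ b, G.Adj a b → b ∈ B → b ∈ K) : IsComponentIn G B K := by
  obtain ⟨y, hy, -⟩ := id h
  refine ⟨y, hy, fun z => ⟨fun hz => ?_, fun hz => (hz.of_closed hK hy).mem_right⟩⟩
  exact (((h.mem_iff hy).1 hz).of_closed (fun a ha b hab hb => h.mem_of_adj ha hab hb) hy).mono
    hKB

end IsComponentIn

section Csupp

variable {U : Set V} {y z : V}

lemma reachableIn_iff_reachable (hy : y ∈ U) (hz : z ∈ U) :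
    ReachableIn G U y z ↔ (G.induce U).Reachable ⟨y, hy⟩ ⟨z, hz⟩ :=
  ⟨fun ⟨p, hp⟩ => ⟨p.induce U hp⟩, fun ⟨q⟩ => by
    have hq : ∀ x ∈ (q.map (Embedding.induce U).toHom).support, x ∈ U := by
      simp only [Walk.support_map, List.mem_map]
      rintro _ ⟨x, -, rfl⟩
      exact x.2
    exact ⟨_, hq⟩⟩

lemma mem_csupp_connectedComponentMk (hy : y ∈ U) :
    z ∈ csupp G U ((G.induce U).connectedComponentMk ⟨y, hy⟩) ↔ ReachableIn G U y z := by
  constructor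
  · rintro ⟨⟨z, hz⟩, hC, rfl⟩
    exact (reachableIn_iff_reachable hy hz).2 (ConnectedComponent.eq.1 hC).symm
  · intro h
    refine ⟨⟨z, h.mem_right⟩, ConnectedComponent.eq.2 ?_, rfl⟩
    exact ((reachableIn_iff_reachable hy h.mem_right).1 h).symm

lemma isComponentIn_csupp (C : (G.induce U).ConnectedComponent) :
    IsComponentIn G U (csupp G U C) := by
  induction C using ConnectedComponent.ind with
  | h y => exact ⟨y, (mem_csupp_connectedComponentMk y.2).2 (.refl y.2),
      fun _ => mem_csupp_connectedComponentMk y.2⟩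

lemma IsComponentIn.exists_csupp_eq (h : IsComponentIn G U K) :
    ∃ C, csupp G U C = K := by
  obtain ⟨y, hy, hK⟩ := id h
  exact ⟨_, Set.ext fun z => (mem_csupp_connectedComponentMk (h.subset hy)).trans (hK z).symm⟩

lemma csupp_injective : Function.Injective (csupp G U) :=
  (Set.image_injective.2 Subtype.val_injective).comp ConnectedComponent.supp_injective

lemma ncard_setOf_csupp (Q : Set V → Prop) :
    {C | Q (csupp G U C)}.ncard = {K | IsComponentIn G U K ∧ Q K}.ncard := by
  rw [← Set.ncard_image_of_injective _ csupp_injective]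
  congr 1
  ext K
  constructor
  · rintro ⟨C, hC, rfl⟩
    exact ⟨isComponentIn_csupp C, hC⟩
  · rintro ⟨hK, hQ⟩
    obtain ⟨C, rfl⟩ := hK.exists_csupp_eq
    exact ⟨C, hQ, rfl⟩

end Csupp

section Components

variable {U : Set V}

lemma sUnion_setOf_isComponentIn : ⋃₀ {K | IsComponentIn G U K} = U :=
  subset_antisymm (Set.sUnion_subset fun _ hK => hK.subset) fun _ hz =>
    ⟨_, isComponentIn_setOf_reachableIn hz, .refl hz⟩

lemma pairwiseDisjoint_setOf_isComponentIn :
    {K | IsComponentIn G U K}.PairwiseDisjoint id := fun _ h₁ _ h₂ hne =>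
  Set.disjoint_left.2 fun _ hz₁ hz₂ => hne (h₁.eq_of_mem h₂ hz₁ hz₂)

lemma IsComponentIn.disjoint_neighborSet (hK : IsComponentIn G U K) (hwU : w ∈ U)
    (hwK : w ∉ K) : Disjoint (G.neighborSet w) K :=
  Set.disjoint_right.2 fun _ hz hwz => hwK (hK.mem_of_adj hz (G.adj_symm hwz) hwU)

end Components

lemma eBetween_comm : eBetween G A B = eBetween G B A := by
  rw [eBetween, ← Set.ncard_image_of_injective _ Prod.swap_injective]
  congr 1
  ext ⟨a, b⟩
  simp [Set.image_swap_eq_preimage_swap, G.adj_comm, and_left_comm]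

lemma eBetween_congr_right (h : ∀ a ∈ A, ∀ b, G.Adj a b → (b ∈ B ↔ b ∈ C)) :
    eBetween G A B = eBetween G A C := by
  rw [eBetween, eBetween]
  congr 1
  ext ⟨a, b⟩
  exact ⟨fun ⟨ha, hb, hab⟩ => ⟨ha, (h a ha b hab).1 hb, hab⟩,
    fun ⟨ha, hb, hab⟩ => ⟨ha, (h a ha b hab).2 hb, hab⟩⟩

lemma union_insert_sdiff_singleton {S T : Set V} {v : V} (hvS : v ∉ S) :
    S ∪ insert w (T \ {v}) = insert w ((S ∪ T) \ {v}) := by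
  ext z
  by_cases hzv : z = v
  · subst hzv
    simp [hvS]
  · simp only [Set.mem_union, Set.mem_insert_iff, Set.mem_sdiff, Set.mem_singleton_iff, hzv]
    tauto

lemma compl_insert_sdiff_singleton {X : Set V} {v : V} (hwv : w ≠ v) :
    (insert w (X \ {v}))ᶜ = insert v (Xᶜ \ {w}) := by
  ext z
  by_cases hzv : z = v
  · subst hzv
    simp [hwv.symm]
  · simp only [Set.mem_compl_iff, Set.mem_insert_iff, Set.mem_sdiff, Set.mem_singleton_iff, hzv]
    tauto

section Counting

variable [Finite V]

lemma even_eBetween_self : Even (eBetween G A A) := by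
  classical
  have := Fintype.ofFinite V
  let H := ((⊤ : G.Subgraph).induce A).spanningCoe
  have hH : eBetween G A A = (Finset.univ.filter fun (x, y) ↦ H.Adj x y).card := by
    rw [eBetween, ← Set.ncard_coe_finset]
    congr 1
    ext p
    simp [H]
  rw [hH, ← H.two_mul_card_edgeFinset]
  exact even_two_mul _

lemma eBetween_union_right (h : Disjoint B C) :
    eBetween G A (B ∪ C) = eBetween G A B + eBetween G A C := by
  rw [eBetween, eBetween, eBetween, ← Set.ncard_union_eq _ (Set.toFinite _) (Set.toFinite _)]
  · congr 1
    ext p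
    simp only [Set.mem_union, Set.mem_ofPred_eq]
    tauto
  · exact Set.disjoint_left.2 fun p hB hC => Set.disjoint_left.1 h hB.2.1 hC.2.1

lemma finsum_degIn_eq_eBetween (A B : Set V) : ∑ᶠ a ∈ A, degIn G B a = eBetween G A B := by
  have hpairs : {p : V × V | p.1 ∈ A ∧ p.2 ∈ B ∧ G.Adj p.1 p.2} =
      ⋃ a ∈ A, Prod.mk a '' (G.neighborSet a ∩ B) := by
    ext ⟨a, b⟩
    simp [and_comm, and_left_comm]
  rw [eBetween, hpairs, (Set.toFinite A).ncard_biUnion (fun _ _ => Set.toFinite _)]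
  · exact finsum_mem_congr rfl fun a _ =>
      (Set.ncard_image_of_injective _ (Prod.mk_right_injective a)).symm
  · exact fun a _ a' _ hne => Set.disjoint_left.2 fun _ ⟨_, _, h⟩ ⟨_, _, h'⟩ =>
      hne (congrArg Prod.fst (h.trans h'.symm))

lemma eBetween_sUnion {𝒜 : Set (Set V)} (h : 𝒜.PairwiseDisjoint id) (B : Set V) :
    eBetween G (⋃₀ 𝒜) B = ∑ᶠ K ∈ 𝒜, eBetween G K B := by
  simp_rw [← finsum_degIn_eq_eBetween]
  exact finsum_mem_sUnion h (Set.toFinite _) fun _ _ => Set.toFinite _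

end Counting

def oddComponentsIn (G : SimpleGraph V) (U T : Set V) : Set (Set V) :=
  {K | IsComponentIn G U K ∧ Odd (eBetween G K T)}

lemma hNum_eq_ncard_oddComponentsIn (G : SimpleGraph V) (S T : Set V) :
    hNum G S T = (oddComponentsIn G (S ∪ T)ᶜ T).ncard :=
  ncard_setOf_csupp fun K => Odd (eBetween G K T)

section Parity

variable [Finite V] {S T : Set V} {v : V}

lemma even_eBetween_add_ncard_oddComponentsIn (U T : Set V) :
    Even (eBetween G U T + (oddComponentsIn G U T).ncard) := by
  classical
  have h𝒦 : {K | IsComponentIn G U K}.Finite := Set.toFinite _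
  have hsum :=
    eBetween_sUnion (G := G) (pairwiseDisjoint_setOf_isComponentIn (G := G) (U := U)) T
  rw [sUnion_setOf_isComponentIn, finsum_mem_eq_finite_toFinset_sum _ h𝒦] at hsum
  rw [hsum, Nat.even_add, Finset.even_sum_iff_even_card_odd, ← Set.ncard_coe_finset]
  simp [oddComponentsIn]

lemma even_deltaST (hST : Disjoint S T) : Even (deltaST G S T) := by
  have hcompl : Sᶜ = (S ∪ T)ᶜ ∪ T := by
    ext z
    have : z ∈ S → z ∉ T := fun h => Set.disjoint_left.1 hST h
    simp only [Set.mem_compl_iff, Set.mem_union]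
    tauto
  have hsum : ∑ᶠ t ∈ T, degIn G Sᶜ t = eBetween G (S ∪ T)ᶜ T + eBetween G T T := by
    rw [finsum_degIn_eq_eBetween, hcompl,
      eBetween_union_right (disjoint_compl_left.mono_right Set.subset_union_right), eBetween_comm]
  obtain ⟨a, ha⟩ := even_eBetween_add_ncard_oddComponentsIn (G := G) (S ∪ T)ᶜ T
  obtain ⟨b, hb⟩ := even_eBetween_self (G := G) (A := T)
  rw [deltaST, ← Nat.cast_finsum_mem (Set.toFinite T), hsum, hNum_eq_ncard_oddComponentsIn]
  exact ⟨S.ncard + a + b - T.ncard - (oddComponentsIn G (S ∪ T)ᶜ T).ncard, by push_cast; omega⟩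

lemma deltaST_swap (hvT : v ∈ T) (hwT : w ∉ T) :
    deltaST G S (insert w (T \ {v})) + degIn G Sᶜ v + hNum G S (insert w (T \ {v})) =
      deltaST G S T + degIn G Sᶜ w + hNum G S T := by
  have hw : w ∉ T \ {v} := fun h => hwT h.1
  have hsum := finsum_mem_insert (fun t => (degIn G Sᶜ t : ℤ)) hw (Set.toFinite _)
  have hsum' := finsum_mem_insert (fun t => (degIn G Sᶜ t : ℤ)) (fun h => h.2 rfl : v ∉ T \ {v})
    (Set.toFinite _)
  rw [Set.insert_sdiff_self_of_mem hvT] at hsum'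
  have hcard : (insert w (T \ {v})).ncard = T.ncard := by
    rw [Set.ncard_insert_of_notMem hw, Set.ncard_sdiff_singleton_add_one hvT]
  simp only [deltaST, hcard, hsum, hsum']
  ring

end Parity

section Swap

variable {U T : Set V} {v x y z : V}

lemma IsComponentIn.swap (hK : IsComponentIn G U K) (hKv : Disjoint (G.neighborSet v) K)
    (hwK : w ∉ K) : IsComponentIn G (insert v (U \ {w})) K := by
  refine hK.of_closed (fun z hz => .inr ⟨hK.subset hz, by rintro rfl; exact hwK hz⟩) ?_
  rintro a ha b hab (rfl | ⟨hb, -⟩)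
  · exact absurd ha (Set.disjoint_left.1 hKv (G.adj_symm hab))
  · exact hK.mem_of_adj ha hab hb

lemma reachableIn_swap (hvU : v ∉ U) (hw : (G.neighborSet w ∩ insert v U).Subsingleton)
    (hyw : y ≠ w) (h : ReachableIn G U y z) (hvz : G.Adj v z) :
    ReachableIn G (insert v (U \ {w})) y v := by
  by_cases hzw : z = w
  · subst hzw
    obtain ⟨u, hu, hzu⟩ := h.symm.exists_adj_of_ne (Ne.symm hyw)
    exact absurd (hw ⟨hzu, .inr hu⟩ ⟨G.adj_symm hvz, .inl rfl⟩ ▸ hu) hvU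
  · have hwU : (G.neighborSet w ∩ U).Subsingleton :=
      hw.anti (Set.inter_subset_inter_right _ (Set.subset_insert _ _))
    exact ((h.diff_singleton hwU hyw hzw).mono (Set.subset_insert _ _)).trans_adj
      (G.adj_symm hvz) (.inl rfl)

lemma IsComponentIn.of_swap (hvU : v ∉ U) (hw : (G.neighborSet w ∩ insert v U).Subsingleton)
    (hx : ReachableIn G U w x) (hvx : G.Adj v x) (hK : IsComponentIn G (insert v (U \ {w})) K)
    (hvK : v ∉ K) : IsComponentIn G U K ∧ Disjoint (G.neighborSet v) K := by
  obtain ⟨y, hy, -⟩ := id hK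
  obtain ⟨hyU, hyw⟩ : y ∈ U \ {w} := (hK.subset hy).resolve_left (by rintro rfl; exact hvK hy)
  have hK₀ := isComponentIn_setOf_reachableIn (G := G) hyU
  have hK₀v : Disjoint (G.neighborSet v) {z | ReachableIn G U y z} :=
    Set.disjoint_right.2 fun z hz hvz =>
      hvK ((hK.mem_iff hy).2 (reachableIn_swap hvU hw hyw hz hvz))
  have hwK₀ : w ∉ {z | ReachableIn G U y z} := fun hyw' =>
    Set.disjoint_right.1 hK₀v (hyw'.trans hx) hvx
  rw [hK.eq_of_mem (hK₀.swap hK₀v hwK₀) hy (.refl hyU)]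
  exact ⟨hK₀, hK₀v⟩

lemma eBetween_swap_eq (hKv : Disjoint (G.neighborSet v) K)
    (hKw : Disjoint (G.neighborSet w) K) : eBetween G K (insert w (T \ {v})) = eBetween G K T :=
  eBetween_congr_right fun a ha b hab => by
    have hbv : b ≠ v := by rintro rfl; exact Set.disjoint_left.1 hKv (G.adj_symm hab) ha
    have hbw : b ≠ w := by rintro rfl; exact Set.disjoint_left.1 hKw (G.adj_symm hab) ha
    simp [hbv, hbw]

variable [Finite V]

lemma le_ncard_oddComponentsIn_swap (hwU : w ∈ U) (hx : ReachableIn G U w x)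
    (hvx : G.Adj v x) :
    {K ∈ oddComponentsIn G U T | Disjoint (G.neighborSet v) K}.ncard ≤
      (oddComponentsIn G (insert v (U \ {w})) (insert w (T \ {v}))).ncard := by
  refine Set.ncard_le_ncard ?_ (Set.toFinite _)
  rintro K ⟨⟨hK, hodd⟩, hKv⟩
  have hwK : w ∉ K := fun hwK => Set.disjoint_right.1 hKv ((hK.mem_iff hwK).2 hx) hvx
  refine ⟨hK.swap hKv hwK, ?_⟩
  rwa [eBetween_swap_eq hKv (hK.disjoint_neighborSet hwU hwK)]

/-- All components of `G[U - w + v]` but the one of `v` are untouched components of `G[U]`. -/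
lemma ncard_oddComponentsIn_swap_le (hvU : v ∉ U) (hwU : w ∈ U)
    (hw : (G.neighborSet w ∩ insert v U).Subsingleton) (hx : ReachableIn G U w x)
    (hvx : G.Adj v x) :
    (oddComponentsIn G (insert v (U \ {w})) (insert w (T \ {v}))).ncard ≤
      {K ∈ oddComponentsIn G U T | Disjoint (G.neighborSet v) K}.ncard + 1 := by
  have hvU' : v ∈ insert v (U \ {w}) := .inl rfl
  refine (Set.ncard_le_ncard (t := insert {z | ReachableIn G (insert v (U \ {w})) v z} _) ?_
    (Set.toFinite _)).trans (Set.ncard_insert_le _ _)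
  rintro K ⟨hK, hodd⟩
  by_cases hvK : v ∈ K
  · exact .inl (hK.eq_of_mem (isComponentIn_setOf_reachableIn hvU') hvK (.refl hvU'))
  · obtain ⟨hKU, hKv⟩ := hK.of_swap hvU hw hx hvx hvK
    have hwK : w ∉ K := fun hwK =>
      (hK.subset hwK).elim (fun h => hvU (h ▸ hwU)) fun h => h.2 rfl
    refine .inr ⟨⟨hKU, ?_⟩, hKv⟩
    rwa [← eBetween_swap_eq hKv (hKU.disjoint_neighborSet hwU hwK)]

lemma ncard_setOf_isComponentIn_not_disjoint_le (U : Set V) (v : V) :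
    {K | IsComponentIn G U K ∧ ¬ Disjoint (G.neighborSet v) K}.ncard ≤ degIn G U v :=
  calc _ ≤ ((fun z => {y | ReachableIn G U z y}) '' (G.neighborSet v ∩ U)).ncard := by
        refine Set.ncard_le_ncard ?_ (Set.toFinite _)
        rintro K ⟨hK, hvK⟩
        obtain ⟨z, hvz, hzK⟩ := Set.not_disjoint_iff.1 hvK
        exact ⟨z, ⟨hvz, hK.subset hzK⟩, Set.ext fun y => (hK.mem_iff hzK).symm⟩
    _ ≤ degIn G U v := Set.ncard_image_le (Set.toFinite _)

end Swap

section Barrier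

variable [Finite V] {S T : Set V} {v x : V}

/-- Since `δ` is always even, `δ` growing by at most one under the swap means it does not grow. -/
lemma IsMinBarrier.swap (hmin : IsMinBarrier G S T) (hvT : v ∈ T) (hwST : w ∉ S ∪ T)
    (hδ : deltaST G S (insert w (T \ {v})) ≤ deltaST G S T + 1) :
    IsMinBarrier G S (insert w (T \ {v})) := by
  have hvS : v ∉ S := Set.disjoint_right.1 hmin.1.1 hvT
  have hdisj : Disjoint S (insert w (T \ {v})) := Set.disjoint_left.2 fun z hzS hz =>
    hz.elim (fun h => hwST (.inl (h ▸ hzS))) fun h => Set.disjoint_left.1 hmin.1.1 hzS h.1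
  have hcard : (S ∪ insert w (T \ {v})).ncard = (S ∪ T).ncard := by
    rw [union_insert_sdiff_singleton hvS, Set.ncard_insert_of_notMem (fun h => hwST h.1),
      Set.ncard_sdiff_singleton_add_one (.inr hvT)]
  obtain ⟨a, ha⟩ := even_deltaST (G := G) hmin.1.1
  obtain ⟨b, hb⟩ := even_deltaST (G := G) hdisj
  have hbar := hmin.1.2
  exact ⟨⟨hdisj, by omega⟩, fun S' T' h => hcard ▸ hmin.2 S' T' h⟩

theorem two_le_degIn_compl (hmin : IsMinBarrier G S T)
    (hh : ∀ S' T' : Set V, IsMinBarrier G S' T' → hNum G S T ≤ hNum G S' T') (hvT : v ∈ T)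
    (hv : 2 ≤ {K ∈ oddComponentsIn G (S ∪ T)ᶜ T | ¬ Disjoint (G.neighborSet v) K}.ncard)
    (hwU : w ∈ (S ∪ T)ᶜ) (hx : ReachableIn G (S ∪ T)ᶜ w x) (hvx : G.Adj v x) :
    2 ≤ degIn G Sᶜ w := by
  by_contra! hw
  set U := (S ∪ T)ᶜ
  have hvS : v ∉ S := Set.disjoint_right.1 hmin.1.1 hvT
  have hvU : v ∉ U := fun h => h (.inr hvT)
  have hwT : w ∉ T := fun h => hwU (.inr h)
  have hwv : w ≠ v := by rintro rfl; exact hvU hwU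
  have hU' : (S ∪ insert w (T \ {v}))ᶜ = insert v (U \ {w}) := by
    rw [union_insert_sdiff_singleton hvS, compl_insert_sdiff_singleton hwv]
  have hwsub : (G.neighborSet w ∩ insert v U).Subsingleton := by
    have hsub : insert v U ⊆ Sᶜ := Set.insert_subset hvS fun z hz h => hz (.inl h)
    exact (Set.ncard_le_one_iff_subsingleton.1 (show degIn G Sᶜ w ≤ 1 by omega)).anti
      (Set.inter_subset_inter_right _ hsub)
  have hsplit : {K ∈ oddComponentsIn G U T | Disjoint (G.neighborSet v) K}.ncard +
      {K ∈ oddComponentsIn G U T | ¬ Disjoint (G.neighborSet v) K}.ncard = hNum G S T := by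
    rw [hNum_eq_ncard_oddComponentsIn]
    exact Set.ncard_inter_add_ncard_sdiff_eq_ncard _ {K | Disjoint (G.neighborSet v) K}
  have hlo := le_ncard_oddComponentsIn_swap (T := T) hwU hx hvx
  have hhi := ncard_oddComponentsIn_swap_le (T := T) hvU hwU hwsub hx hvx
  rw [← hU', ← hNum_eq_ncard_oddComponentsIn] at hlo hhi
  have htouch : {K ∈ oddComponentsIn G U T | ¬ Disjoint (G.neighborSet v) K}.ncard ≤
      degIn G Sᶜ v :=
    calc _ ≤ {K | IsComponentIn G U K ∧ ¬ Disjoint (G.neighborSet v) K}.ncard :=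
          Set.ncard_le_ncard (fun K hK => ⟨hK.1.1, hK.2⟩) (Set.toFinite _)
      _ ≤ degIn G U v := ncard_setOf_isComponentIn_not_disjoint_le U v
      _ ≤ degIn G Sᶜ v := Set.ncard_le_ncard
        (Set.inter_subset_inter_right _ fun z hz h => hz (.inl h)) (Set.toFinite _)
  have hswap := deltaST_swap (G := G) (S := S) hvT hwT
  -- `δ(S,T') - δ(S,T) = deg w - deg v + h - h' ≤ 1 - deg v + #(touching) ≤ 1`
  have := hh S _ (hmin.swap hvT hwU (by omega))
  omega

end Barrier

lemma degIn_compl_le_of_eBetween_eq_one [Finite V] {S T : Set V} {v x : V}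
    (hK : IsComponentIn G (S ∪ T)ᶜ K) (hKT : eBetween G K T = 1) (hvT : v ∈ T)
    (hvx : G.Adj v x) (hxK : x ∈ K) (hw : w ∈ K) : degIn G Sᶜ w ≤ degIn G (K ∪ {v}) w := by
  refine Set.ncard_le_ncard ?_ (Set.toFinite _)
  rintro z ⟨hwz, hzS⟩
  refine ⟨hwz, ?_⟩
  by_cases hzT : z ∈ T
  · have := (Set.ncard_le_one_iff (Set.toFinite _)).1 hKT.le
      (show (w, z) ∈ _ from ⟨hw, hzT, hwz⟩) (show (x, v) ∈ _ from ⟨hxK, hvT, G.adj_symm hvx⟩)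
    exact .inr (congrArg Prod.snd this)
  · exact .inl (hK.mem_of_adj hw hwz (by simp [hzS, hzT]))

theorem vizing_stmt_10_general [Fintype V] (G : SimpleGraph V) (S T : Set V)
    (hmin : IsMinBarrier G S T)
    (hh : ∀ S' T' : Set V, IsMinBarrier G S' T' → hNum G S T ≤ hNum G S' T')
    (v : V) (hv : v ∈ T)
    (hCv : 2 ≤ {C ∈ oddComps G S T | degIn G (csupp G (S ∪ T)ᶜ C) v = 1}.ncard) :
    ∀ D ∈ {C ∈ oddComps G S T | eBetween G (csupp G (S ∪ T)ᶜ C) T = 1 ∧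
        degIn G (csupp G (S ∪ T)ᶜ C) v = 1},
      ∀ w ∈ csupp G (S ∪ T)ᶜ D,
        2 ≤ degIn G (csupp G (S ∪ T)ᶜ D ∪ {v}) w := by
  rintro D ⟨-, hDT, hDv⟩ w hw
  have hD := isComponentIn_csupp D
  obtain ⟨x, hvx, hxD⟩ :=
    Set.nonempty_of_ncard_ne_zero (show degIn G (csupp G (S ∪ T)ᶜ D) v ≠ 0 by omega)
  have htouch :
      2 ≤ {K ∈ oddComponentsIn G (S ∪ T)ᶜ T | ¬ Disjoint (G.neighborSet v) K}.ncard := by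
    refine hCv.trans ((ncard_setOf_csupp fun K => Odd (eBetween G K T) ∧ degIn G K v = 1).trans_le
      (Set.ncard_le_ncard (fun K ⟨hK, hodd, hKv⟩ => ⟨⟨hK, hodd⟩, ?_⟩) (Set.toFinite _)))
    exact Set.not_disjoint_iff_nonempty_inter.2
      (Set.nonempty_of_ncard_ne_zero (show degIn G K v ≠ 0 by omega))
  exact (two_le_degIn_compl hmin hh hv htouch (hD.subset hw) ((hD.mem_iff hw).1 hxD) hvx).trans
    (degIn_compl_le_of_eBetween_eq_one hD hDT hv hvx hxD hw)

theorem vizing_stmt_10 [Fintype V] (G : SimpleGraph V) (S T : Set V)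
    (hG : ¬ HasTwoFactor G) (hmin : IsMinBarrier G S T)
    (hh : ∀ S' T' : Set V, IsMinBarrier G S' T' → hNum G S T ≤ hNum G S' T')
    (v : V) (hv : v ∈ T)
    (hCv : 2 ≤ {C ∈ oddComps G S T | degIn G (csupp G (S ∪ T)ᶜ C) v = 1}.ncard)
    (hC1v : 1 ≤ {C ∈ oddComps G S T | eBetween G (csupp G (S ∪ T)ᶜ C) T = 1 ∧
      degIn G (csupp G (S ∪ T)ᶜ C) v = 1}.ncard) :
    ∀ D ∈ {C ∈ oddComps G S T | eBetween G (csupp G (S ∪ T)ᶜ C) T = 1 ∧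
        degIn G (csupp G (S ∪ T)ᶜ C) v = 1},
      ∀ w ∈ csupp G (S ∪ T)ᶜ D,
        2 ≤ degIn G (csupp G (S ∪ T)ᶜ D ∪ {v}) w :=
  vizing_stmt_10_general G S T hmin hh v hv hCv

end VizingTwoFactor
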